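/- arXiv:2302.11202 — 2 statements merged into one kernel-verified Lean document; each statement's English description precedes it below -/
import Mathlib

section
/- Let Λ be a left hereditary ring and (M_i)_{i∈I} a family of left Λ-modules. If each M_i is stable, then the direct sum ⊕_{i∈I} M_i is stable. -/
universe u

/-- A module is *stable* if it has no nonzero projective direct summand. -/
def IsStableModule (Λ : Type u) [Ring Λ] (M : Type u) [AddCommGroup M] [Module Λ M] : Prop :=
  ∀ p : Submodule Λ M, Module.Projective Λ p → (∃ q, IsCompl p q) → p = ⊥

/-!
Over a left hereditary ring a stable module `N` has no nonzero linear form `φ : N → Λ`: the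
image of `φ` is a projective left ideal, so `φ` splits onto it and a copy of the image is a
projective summand of `N`. Conversely, over any ring a module without nonzero forms is stable,
since a nonzero projective summand has a nonzero form, which extends to `N` through the
projection. A form on `⨁ i, M i` is determined by its restrictions to the `M i`.
-/

open Module

variable {Λ : Type u} [Ring Λ] {N : Type u} [AddCommGroup N] [Module Λ N]

theorem isStableModule_of_forall_dual_eq_zero (h : ∀ φ : Dual Λ N, φ = 0) :
    IsStableModule Λ N := by
  rintro p hp ⟨q, hpq⟩
  refine (Submodule.eq_bot_iff p).mpr fun x hx => (Submodule.mk_eq_zero p hx).mp <|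
    (forall_dual_apply_eq_zero_iff Λ _).mp fun φ => ?_
  rw [← p.projectionOnto_apply_left hpq ⟨x, hx⟩, ← LinearMap.comp_apply,
    h (φ ∘ₗ p.projectionOnto q hpq), LinearMap.zero_apply]

theorem IsStableModule.subsingleton_of_surjective (hN : IsStableModule Λ N)
    {P : Type*} [AddCommGroup P] [Module Λ P] [Projective Λ P]
    (f : N →ₗ[Λ] P) (hf : Function.Surjective f) : Subsingleton P := by
  obtain ⟨s, hs⟩ := projective_lifting_property f LinearMap.id hf
  have hfs : ∀ y, f (s y) = y := LinearMap.congr_fun hs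
  have hs_inj : Function.Injective s := Function.LeftInverse.injective hfs
  let e := LinearEquiv.ofInjective s hs_inj
  have : Projective Λ (LinearMap.range s) := .of_equiv e
  have hproj : ∀ x : LinearMap.range s, (e.toLinearMap ∘ₗ f) x = x := by
    rintro ⟨_, y, rfl⟩
    exact Subtype.ext (by simp [e, hfs])
  have hrange : LinearMap.range s = ⊥ :=
    hN _ this ⟨_, LinearMap.isCompl_of_proj hproj⟩
  refine ⟨fun y y' => hs_inj ?_⟩
  rw [LinearMap.range_eq_bot.mp hrange]
  rfl

theorem IsStableModule.dual_eq_zero (hHered : ∀ I : Ideal Λ, Projective Λ I)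
    (hN : IsStableModule Λ N) (φ : Dual Λ N) : φ = 0 := by
  have := hHered (LinearMap.range φ)
  have := hN.subsingleton_of_surjective φ.rangeRestrict φ.surjective_rangeRestrict
  exact LinearMap.range_eq_bot.mp (Submodule.subsingleton_iff_eq_bot.mp this)

/-- Over a left hereditary ring, a direct sum of stable modules
is stable. -/
theorem isStable_directSum
    (Λ : Type u) [Ring Λ]
    (hHered : ∀ I : Ideal Λ, Module.Projective Λ I)
    (ι : Type u) [DecidableEq ι] (M : ι → Type u)
    [∀ i, AddCommGroup (M i)] [∀ i, Module Λ (M i)]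
    (hM : ∀ i, IsStableModule Λ (M i)) :
    IsStableModule Λ (DirectSum ι M) :=
  isStableModule_of_forall_dual_eq_zero fun _ => DirectSum.linearMap_ext Λ fun i =>
    ((hM i).dual_eq_zero hHered _).trans (LinearMap.zero_comp _).symm
end

section
/- Let Λ be a left hereditary ring. The class of stable left Λ-modules is closed under extensions: if 0 → A → B → C → 0 is a short exact sequence of left Λ-modules with A and C stable, then B is stable. -/
universe u

/-!
A projective summand `p` of `B`, with complement `q`, meets the image of `A` trivially: the
projection of `A` onto `p` has as image a submodule of the projective module `p`, which is
projective because `Λ` is hereditary, so it splits off `A` and must vanish as `A` is stable.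
Hence `ker g ≤ q`, so `g` maps `p` isomorphically onto a projective summand of `C` (complemented
by `g q`), which vanishes as `C` is stable; thus `p ≤ ker g ≤ q` and `p = 0`.

Submodules of projective modules are projective over a hereditary ring: by Baer's criterion
quotients of injective modules are injective, and then a map from `X ≤ P` to `N = M ⧸ K` lifts
to `M` by embedding `M` into an injective `E`, extending `X → N ↪ E ⧸ K` to `P`, and lifting
that to `E` by projectivity of `P`; its restriction to `X` lands in `M`.
-/

open LinearMap Submodule

section Hereditary

variable {Λ : Type u} [Ring Λ]

theorem Module.exists_injective_embedding (M : Type u) [AddCommGroup M] [Module Λ M] :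
    ∃ (E : Type u) (_ : AddCommGroup E) (_ : Module Λ E) (e : M →ₗ[Λ] E),
      Function.Injective e ∧ Module.Injective Λ E := by
  open CategoryTheory in
  let J : ModuleCat Λ := Injective.under (ModuleCat.of Λ M)
  exact ⟨J, inferInstance, inferInstance, (Injective.ι (ModuleCat.of Λ M)).hom,
    (ModuleCat.mono_iff_injective _).mp inferInstance,
    Module.injective_module_of_injective_object Λ J
      (inj := Injective.of_iso (Iso.refl _) (Injective.injective_under _))⟩

theorem Module.Injective.quotient_of_forall_ideal_projective
    (hHered : ∀ I : Ideal Λ, Module.Projective Λ I) (E : Type u) [AddCommGroup E] [Module Λ E]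
    [hE : Module.Injective Λ E] (N : Submodule Λ E) : Module.Injective Λ (E ⧸ N) := by
  refine Module.Baer.injective fun I g ↦ ?_
  obtain ⟨ψ, hψ⟩ := Module.projective_lifting_property (h := hHered I) N.mkQ g N.mkQ_surjective
  obtain ⟨Ψ, hΨ⟩ := hE.out I.subtype I.injective_subtype ψ
  refine ⟨N.mkQ ∘ₗ Ψ, fun x hx ↦ ?_⟩
  change N.mkQ (Ψ (I.subtype ⟨x, hx⟩)) = g ⟨x, hx⟩
  rw [hΨ, ← LinearMap.comp_apply, hψ]

theorem exists_injective_comp_eq_mkQ_comp {M N E : Type u} [AddCommGroup M] [Module Λ M]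
    [AddCommGroup N] [Module Λ N] [AddCommGroup E] [Module Λ E]
    (e : M →ₗ[Λ] E) (he : Function.Injective e) (f : M →ₗ[Λ] N) (hf : Function.Surjective f) :
    ∃ ι : N →ₗ[Λ] E ⧸ (ker f).map e, Function.Injective ι ∧ ι ∘ₗ f = mkQ _ ∘ₗ e := by
  refine ⟨(ker f).mapQ _ e (le_comap_map e _) ∘ₗ (f.quotKerEquivOfSurjective hf).symm.toLinearMap,
    ?_, ?_⟩
  · rw [LinearMap.coe_comp, LinearEquiv.coe_coe]
    refine (LinearMap.ker_eq_bot.mp ?_).comp (LinearEquiv.injective _)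
    rw [ker_mapQ, comap_map_eq_of_injective he, mkQ_map_self]
  · ext m
    simp

theorem Module.Projective.submodule_of_forall_ideal_projective
    (hHered : ∀ I : Ideal Λ, Module.Projective Λ I) (P : Type u) [AddCommGroup P] [Module Λ P]
    [Module.Projective Λ P] (X : Submodule Λ P) : Module.Projective Λ X := by
  refine Module.Projective.of_lifting_property fun {M N} _ _ _ _ f g hf ↦ ?_
  obtain ⟨E, _, _, e, he, _⟩ := Module.exists_injective_embedding (Λ := Λ) M
  set K := (ker f).map e
  have := Module.Injective.quotient_of_forall_ideal_projective hHered E K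
  obtain ⟨ι, hι, hιf⟩ := exists_injective_comp_eq_mkQ_comp e he f hf
  obtain ⟨G, hG⟩ := Module.Injective.out X.subtype X.injective_subtype (ι ∘ₗ g)
  obtain ⟨G', hG'⟩ := Module.projective_lifting_property K.mkQ G K.mkQ_surjective
  have hmkQ : ∀ x : X, K.mkQ (G' x) = ι (g x) := fun x ↦ by
    rw [← LinearMap.comp_apply, hG', ← X.subtype_apply, hG, LinearMap.comp_apply]
  have hmem : ∀ x : X, G' x ∈ range e := fun x ↦ by
    obtain ⟨m, hm⟩ := hf (g x)
    have : K.mkQ (G' x - e m) = 0 := by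
      rw [map_sub, hmkQ, ← hm, ← LinearMap.comp_apply ι, hιf, LinearMap.comp_apply, sub_self]
    obtain ⟨k, -, hk⟩ := (Submodule.Quotient.mk_eq_zero K).mp this
    exact ⟨k + m, by rw [map_add, hk, sub_add_cancel]⟩
  let h : X →ₗ[Λ] M := (LinearEquiv.ofInjective e he).symm.toLinearMap ∘ₗ
    (G' ∘ₗ X.subtype).codRestrict (range e) hmem
  have heh : ∀ x, e (h x) = G' x := fun x ↦
    congrArg Subtype.val ((LinearEquiv.ofInjective e he).apply_symm_apply _)
  refine ⟨h, LinearMap.ext fun x ↦ hι ?_⟩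
  rw [LinearMap.comp_apply, ← LinearMap.comp_apply ι, hιf, LinearMap.comp_apply, heh]
  exact hmkQ x

end Hereditary

section Complements

variable {R M N : Type*} [Ring R] [AddCommGroup M] [Module R M] [AddCommGroup N] [Module R N]

theorem Submodule.isCompl_map_of_ker_le {p q : Submodule R M} (hpq : IsCompl p q)
    (g : M →ₗ[R] N) (hg : Function.Surjective g) (hker : ker g ≤ q) :
    IsCompl (p.map g) (q.map g) := by
  refine ⟨?_, ?_⟩
  · rw [disjoint_iff, eq_bot_iff]
    rintro _ ⟨⟨a, ha, rfl⟩, b, hb, hab⟩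
    have hab' : a - b ∈ q := hker (by simp [hab])
    have : a ∈ p ⊓ q := ⟨ha, by simpa using add_mem hab' hb⟩
    rw [hpq.inf_eq_bot, mem_bot] at this
    simp [this]
  · rw [codisjoint_iff, ← map_sup, hpq.sup_eq_top, map_top, range_eq_top.mpr hg]

noncomputable def Submodule.equivMapOfDisjointKer (p : Submodule R M) (g : M →ₗ[R] N)
    (h : Disjoint p (ker g)) : p ≃ₗ[R] p.map g :=
  (LinearEquiv.ofInjective _ (injective_domRestrict_iff.mpr h)).trans
    (LinearEquiv.ofEq _ _ (range_domRestrict p g))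

end Complements

section Stable

variable {Λ : Type u} [Ring Λ]

theorem IsStableModule.subsingleton_of_surjective_s7 {M P : Type u} [AddCommGroup M] [Module Λ M]
    [AddCommGroup P] [Module Λ P] [Module.Projective Λ P] (hM : IsStableModule Λ M)
    (φ : M →ₗ[Λ] P) (hφ : Function.Surjective φ) : Subsingleton P := by
  obtain ⟨s, hs⟩ := Module.projective_lifting_property φ LinearMap.id hφ
  have hsec : ∀ x, φ (s x) = x := LinearMap.congr_fun hs
  have hs_inj : Function.Injective s := Function.LeftInverse.injective hsec
  have : Module.Projective Λ (range s) :=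
    Module.Projective.of_equiv' (LinearEquiv.ofInjective s hs_inj)
  have hproj : ∀ y : range s, (s.rangeRestrict ∘ₗ φ) y = y := by
    rintro ⟨-, x, rfl⟩
    exact Subtype.ext (by simp [hsec])
  have hbot := hM _ this ⟨_, LinearMap.isCompl_of_proj hproj⟩
  refine ⟨fun x y ↦ ?_⟩
  rw [← hsec x, ← hsec y, range_eq_bot.mp hbot, LinearMap.zero_apply, LinearMap.zero_apply]

end Stable

theorem isStable_of_extension_general
    (Λ : Type u) [Ring Λ]
    (hHered : ∀ I : Ideal Λ, Module.Projective Λ I)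
    (A B C : Type u) [AddCommGroup A] [Module Λ A]
    [AddCommGroup B] [Module Λ B] [AddCommGroup C] [Module Λ C]
    (f : A →ₗ[Λ] B) (g : B →ₗ[Λ] C)
    (hg : Function.Surjective g)
    (hex : Function.Exact f g)
    (hA : IsStableModule Λ A) (hC : IsStableModule Λ C) :
    IsStableModule Λ B := by
  rintro p hp ⟨q, hpq⟩
  have hfq : range f ≤ q := by
    set φ := p.projectionOnto q hpq ∘ₗ f
    have := Module.Projective.submodule_of_forall_ideal_projective hHered p (range φ)
    have := hA.subsingleton_of_surjective_s7 φ.rangeRestrict φ.surjective_rangeRestrict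
    rw [← ker_projectionOnto hpq, range_le_ker_iff]
    exact range_eq_bot.mp eq_bot_of_subsingleton
  have hker : ker g ≤ q := hex.linearMap_ker_eq ▸ hfq
  have : Module.Projective Λ (p.map g) :=
    .of_equiv' (p.equivMapOfDisjointKer g (hpq.disjoint.mono_right hker))
  have hpg : p.map g = ⊥ := hC _ this ⟨_, isCompl_map_of_ker_le hpq g hg hker⟩
  exact hpq.disjoint.eq_bot_of_le ((le_ker_iff_map.mpr hpg).trans hker)

/-- Over a left hereditary ring, the class of stable modules is
closed under extensions. -/
theorem isStable_of_extension
    (Λ : Type u) [Ring Λ]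
    (hHered : ∀ I : Ideal Λ, Module.Projective Λ I)
    (A B C : Type u) [AddCommGroup A] [Module Λ A]
    [AddCommGroup B] [Module Λ B] [AddCommGroup C] [Module Λ C]
    (f : A →ₗ[Λ] B) (g : B →ₗ[Λ] C)
    (hf : Function.Injective f) (hg : Function.Surjective g)
    (hex : Function.Exact f g)
    (hA : IsStableModule Λ A) (hC : IsStableModule Λ C) :
    IsStableModule Λ B :=
  isStable_of_extension_general Λ hHered A B C f g hg hex hA hC
end
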